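/- arXiv:2105.07017 — 2 statements merged into one kernel-verified Lean document; each statement's English description precedes it below -/
import Mathlib

section
/- With U, U_⊥, A ∈ so(p), B ∈ ℝ^{(n−p)×p} as above, γ(t) = (U U_⊥) exp_m(t[[0,−Bᵀ],[B,0]]) [exp_m(tA); 0] and γ_⊥(t) = (U U_⊥) exp_m(t[[0,−Bᵀ],[B,0]]) [0; I_{n−p}], the covariant acceleration with respect to the canonical metric, given by D_tγ′(t) = γ″(t) + γ′(t)γ′(t)ᵀγ(t) + γ(t)((γ(t)ᵀγ′(t))² + γ′(t)ᵀγ′(t)), satisfies D_tγ′(t) = γ_⊥(t)BA exp_m(tA) for all t ∈ ℝ. -/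
open Matrix NormedSpace

attribute [local instance] Matrix.frobeniusNormedAddCommGroup Matrix.frobeniusNormedSpace

/-- The economy-size quasi-geodesic in lifted form. -/
noncomputable def econQG (n p : ℕ) (U : Matrix (Fin n) (Fin p) ℝ)
    (Uperp : Matrix (Fin n) (Fin (n - p)) ℝ)
    (A : Matrix (Fin p) (Fin p) ℝ) (B : Matrix (Fin (n - p)) (Fin p) ℝ) (t : ℝ) :
    Matrix (Fin n) (Fin p) ℝ :=
  fromCols U Uperp * exp (t • fromBlocks 0 (-Bᵀ) B 0) * fromRows (exp (t • A)) 0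

/-- The orthogonal completion curve of the economy-size quasi-geodesic. -/
noncomputable def econQGperp (n p : ℕ) (U : Matrix (Fin n) (Fin p) ℝ)
    (Uperp : Matrix (Fin n) (Fin (n - p)) ℝ)
    (A : Matrix (Fin p) (Fin p) ℝ) (B : Matrix (Fin (n - p)) (Fin p) ℝ) (t : ℝ) :
    Matrix (Fin n) (Fin (n - p)) ℝ :=
  fromCols U Uperp * exp (t • fromBlocks 0 (-Bᵀ) B 0) * fromRows 0 1

section helpers

attribute [local instance] Matrix.frobeniusNormedRing Matrix.frobeniusNormedAlgebra

theorem isBoundedBilinearMap_matMul {l m n : Type*} [Fintype l] [Fintype m] [Fintype n] :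
    IsBoundedBilinearMap ℝ
      (fun q : Matrix l m ℝ × Matrix m n ℝ => q.1 * q.2) where
  add_left := fun A B C => Matrix.add_mul A B C
  smul_left := fun c A B => Matrix.smul_mul c A B
  add_right := fun A B C => Matrix.mul_add A B C
  smul_right := fun c A B => Matrix.mul_smul A c B
  bound := ⟨1, one_pos, fun A B => by
    simpa using Matrix.frobenius_norm_mul A B⟩

theorem HasDerivAt.matMul {l m n : Type*} [Fintype l] [Fintype m] [Fintype n]
    {f : ℝ → Matrix l m ℝ} {g : ℝ → Matrix m n ℝ} {f' : Matrix l m ℝ}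
    {g' : Matrix m n ℝ} {t : ℝ} (hf : HasDerivAt f f' t) (hg : HasDerivAt g g' t) :
    HasDerivAt (fun u => f u * g u) (f' * g t + f t * g') t := by
  have hb : HasFDerivAt (fun q : Matrix l m ℝ × Matrix m n ℝ => q.1 * q.2)
      (isBoundedBilinearMap_matMul.deriv (f t, g t)) (f t, g t) :=
    isBoundedBilinearMap_matMul.hasFDerivAt (f t, g t)
  have h := hb.comp_hasDerivAt t (hf.prodMk hg)
  rw [add_comm]
  exact h

theorem fromRows_add' {m₁ m₂ n R : Type*} [Add R] (A₁ : Matrix m₁ n R) (A₂ : Matrix m₂ n R)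
    (B₁ : Matrix m₁ n R) (B₂ : Matrix m₂ n R) :
    fromRows A₁ A₂ + fromRows B₁ B₂ = fromRows (A₁ + B₁) (A₂ + B₂) := by
  ext (i | i) j <;> simp

theorem stmt7core (n p : ℕ) (Q : Matrix (Fin n) (Fin p ⊕ Fin (n - p)) ℝ)
    (E : Matrix (Fin p ⊕ Fin (n - p)) (Fin p ⊕ Fin (n - p)) ℝ)
    (F A : Matrix (Fin p) (Fin p) ℝ) (B : Matrix (Fin (n - p)) (Fin p) ℝ)
    (hQ : Qᵀ * Q = 1) (hE : Eᵀ * E = 1) (hF : Fᵀ * F = 1) (hF' : F * Fᵀ = 1)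
    (hAF : A * F = F * A) (hA : Aᵀ = -A)
    (G G' D2 : Matrix (Fin n) (Fin p) ℝ)
    (hG : Q * E * ((fromRows 1 0 : Matrix (Fin p ⊕ Fin (n - p)) (Fin p) ℝ) * F) = G)
    (hG' : Q * E * (fromRows A B * F) = G')
    (hD2 : Q * E * (fromRows (-(Bᵀ * B) + A * A) (B * A + B * A) * F) = D2) :
    D2 + G' * G'ᵀ * G + G * ((Gᵀ * G') ^ 2 + G'ᵀ * G') =
      (Q * E * (fromRows 0 1 : Matrix (Fin p ⊕ Fin (n - p)) (Fin (n - p)) ℝ) : Matrix (Fin n) (Fin (n - p)) ℝ) * B * A * F := by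
  subst hG hG' hD2
  have cQ : ∀ X : Matrix (Fin p ⊕ Fin (n - p)) (Fin p) ℝ, Qᵀ * (Q * X) = X := fun X => by
    rw [← Matrix.mul_assoc, hQ, Matrix.one_mul]
  have cE : ∀ X : Matrix (Fin p ⊕ Fin (n - p)) (Fin p) ℝ, Eᵀ * (E * X) = X := fun X => by
    rw [← Matrix.mul_assoc, hE, Matrix.one_mul]
  have cF : ∀ X : Matrix (Fin p) (Fin p) ℝ, Fᵀ * (F * X) = X := fun X => by
    rw [← Matrix.mul_assoc, hF, Matrix.one_mul]
  have cF' : ∀ X : Matrix (Fin p) (Fin p) ℝ, F * (Fᵀ * X) = X := fun X => by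
    rw [← Matrix.mul_assoc, hF', Matrix.one_mul]
  have cCR1 : ∀ X : Matrix (Fin p) (Fin p) ℝ,
      fromCols (1 : Matrix (Fin p) (Fin p) ℝ) (0 : Matrix (Fin p) (Fin (n - p)) ℝ) *
        (fromRows A B * X) = A * X := fun X => by
    rw [← Matrix.mul_assoc, Matrix.fromCols_mul_fromRows]
    simp
  have cCR2 : ∀ X : Matrix (Fin p) (Fin p) ℝ,
      fromCols Aᵀ Bᵀ * (fromRows (1 : Matrix (Fin p) (Fin p) ℝ)
        (0 : Matrix (Fin (n - p)) (Fin p) ℝ) * X) = Aᵀ * X := fun X => by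
    rw [← Matrix.mul_assoc, Matrix.fromCols_mul_fromRows]
    simp
  have cCR3 : ∀ X : Matrix (Fin p) (Fin p) ℝ,
      fromCols Aᵀ Bᵀ * (fromRows A B * X) = (Aᵀ * A + Bᵀ * B) * X := fun X => by
    rw [← Matrix.mul_assoc, Matrix.fromCols_mul_fromRows]
  have hAF' : Aᵀ * F = F * Aᵀ := by
    rw [hA, Matrix.neg_mul, Matrix.mul_neg, hAF]
  have h1 : (Q * E * ((fromRows 1 0 : Matrix (Fin p ⊕ Fin (n - p)) (Fin p) ℝ) * F))ᵀ * (Q * E * (fromRows A B * F)) = A := by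
    simp only [Matrix.transpose_mul, Matrix.transpose_fromRows, Matrix.transpose_one,
      Matrix.transpose_zero, Matrix.mul_assoc, cQ, cE, cCR1]
    rw [hAF, cF]
  have h2 : (Q * E * (fromRows A B * F))ᵀ * (Q * E * (fromRows A B * F))
      = Fᵀ * ((Aᵀ * A + Bᵀ * B) * F) := by
    simp only [Matrix.transpose_mul, Matrix.transpose_fromRows, Matrix.mul_assoc, cQ, cE, cCR3]
  have h3 : Q * E * (fromRows A B * F) * (Q * E * (fromRows A B * F))ᵀ *
      (Q * E * ((fromRows 1 0 : Matrix (Fin p ⊕ Fin (n - p)) (Fin p) ℝ) * F)) = Q * E * (fromRows A B * (Aᵀ * F)) := by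
    simp only [Matrix.transpose_mul, Matrix.transpose_fromRows, Matrix.transpose_one,
      Matrix.transpose_zero, Matrix.mul_assoc, cQ, cE, cCR2]
    rw [hAF', cF']
  rw [h1, h2, h3]
  -- compress the third term
  have h4 : Q * E * ((fromRows 1 0 : Matrix (Fin p ⊕ Fin (n - p)) (Fin p) ℝ) * F) *
        (A ^ 2 + Fᵀ * ((Aᵀ * A + Bᵀ * B) * F))
      = Q * E * ((fromRows 1 0 : Matrix (Fin p ⊕ Fin (n - p)) (Fin p) ℝ) *
        ((A * A + (Aᵀ * A + Bᵀ * B)) * F)) := by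
    have hFA2 : F * (A * A) = A * A * F := by
      rw [← Matrix.mul_assoc, ← hAF, Matrix.mul_assoc, ← hAF, ← Matrix.mul_assoc]
    have hsq : F * (A ^ 2 + Fᵀ * ((Aᵀ * A + Bᵀ * B) * F)) = (A * A + (Aᵀ * A + Bᵀ * B)) * F := by
      rw [Matrix.mul_add, cF', pow_two, hFA2, ← Matrix.add_mul]
    simp only [Matrix.mul_assoc]
    rw [hsq]
  rw [h4]
  -- combine everything over the common factor Q * E * (_ * F)
  rw [show (Q * E * (fromRows 0 1 : Matrix (Fin p ⊕ Fin (n - p)) (Fin (n - p)) ℝ) : Matrix (Fin n) (Fin (n - p)) ℝ) * B * A * F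
      = Q * E * ((fromRows 0 1 : Matrix (Fin p ⊕ Fin (n - p)) (Fin (n - p)) ℝ) *
        ((B * A) * F)) by simp only [Matrix.mul_assoc]]
  simp only [← Matrix.mul_add]
  congr 1
  rw [hA]
  simp only [Matrix.fromRows_mul, Matrix.fromRows_neg, fromRows_add', Matrix.one_mul,
    Matrix.zero_mul, Matrix.neg_mul, Matrix.mul_neg, Matrix.add_mul, Matrix.mul_add,
    Matrix.mul_assoc]
  rw [Matrix.fromRows_ext_iff]
  constructor <;> abel

end helpers

section mainproof

attribute [local instance] Matrix.frobeniusNormedRing Matrix.frobeniusNormedAlgebra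

/-- the covariant acceleration of the economy-size quasi-geodesic
w.r.t. the canonical metric equals `γ⊥(t) B A exp_m(tA)`. -/
theorem stmt7 (n p : ℕ) (U : Matrix (Fin n) (Fin p) ℝ)
    (Uperp : Matrix (Fin n) (Fin (n - p)) ℝ)
    (A : Matrix (Fin p) (Fin p) ℝ) (B : Matrix (Fin (n - p)) (Fin p) ℝ)
    (hU : Uᵀ * U = 1)
    (hO₁ : (fromCols U Uperp)ᵀ * fromCols U Uperp = 1)
    (hO₂ : fromCols U Uperp * (fromCols U Uperp)ᵀ = 1)
    (hA : Aᵀ = -A) :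
    ∀ t : ℝ,
      deriv (deriv (econQG n p U Uperp A B)) t +
          deriv (econQG n p U Uperp A B) t * (deriv (econQG n p U Uperp A B) t)ᵀ *
            econQG n p U Uperp A B t +
          econQG n p U Uperp A B t *
            (((econQG n p U Uperp A B t)ᵀ * deriv (econQG n p U Uperp A B) t) ^ 2 +
              (deriv (econQG n p U Uperp A B) t)ᵀ * deriv (econQG n p U Uperp A B) t) =
        econQGperp n p U Uperp A B t * B * A * exp (t • A) := by
  intro t
  set Q : Matrix (Fin n) (Fin p ⊕ Fin (n - p)) ℝ := fromCols U Uperp with hQdef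
  set S : Matrix (Fin p ⊕ Fin (n - p)) (Fin p ⊕ Fin (n - p)) ℝ :=
    fromBlocks 0 (-Bᵀ) B 0 with hSdef
  -- commutation of A with its exponential
  have hAF : ∀ u : ℝ, A * exp (u • A) = exp (u • A) * A := fun u =>
    (((Commute.refl A).smul_right u).exp_right).eq
  -- skewness of S
  have hSkew : Sᵀ = -S := by
    rw [hSdef, Matrix.fromBlocks_transpose, Matrix.fromBlocks_neg]
    simp
  -- orthogonality of exponentials
  have hEE : (exp (t • S))ᵀ * exp (t • S) = 1 := by
    rw [← Matrix.exp_transpose, Matrix.transpose_smul, hSkew, smul_neg,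
      ← Matrix.exp_add_of_commute _ _ ((Commute.refl (t • S)).neg_left),
      neg_add_cancel, exp_zero]
  have hFF : (exp (t • A))ᵀ * exp (t • A) = 1 := by
    rw [← Matrix.exp_transpose, Matrix.transpose_smul, hA, smul_neg,
      ← Matrix.exp_add_of_commute _ _ ((Commute.refl (t • A)).neg_left),
      neg_add_cancel, exp_zero]
  have hFF' : exp (t • A) * (exp (t • A))ᵀ = 1 := by
    rw [← Matrix.exp_transpose, Matrix.transpose_smul, hA, smul_neg,
      ← Matrix.exp_add_of_commute _ _ ((Commute.refl (t • A)).neg_right),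
      add_neg_cancel, exp_zero]
  -- the derivative machine
  have hD : ∀ (M : Matrix (Fin p ⊕ Fin (n - p)) (Fin p) ℝ) (u : ℝ),
      HasDerivAt (fun v : ℝ => Q * exp (v • S) * (M * exp (v • A)))
        (Q * exp (u • S) * ((S * M + M * A) * exp (u • A))) u := by
    intro M u
    have h := ((hasDerivAt_const u Q).matMul (hasDerivAt_exp_smul_const S u)).matMul
      ((hasDerivAt_const u M).matMul (hasDerivAt_exp_smul_const A u))
    refine h.congr_deriv ?_
    simp only [Matrix.zero_mul, zero_add, Matrix.add_mul, Matrix.mul_add, Matrix.mul_assoc,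
      ← hAF u]
    rw [hAF u]
    rfl
  -- the curve rewritten
  have hfun : econQG n p U Uperp A B =
      fun v : ℝ => Q * exp (v • S) * ((fromRows 1 0 : Matrix (Fin p ⊕ Fin (n - p)) (Fin p) ℝ) * exp (v • A)) := by
    funext v
    simp [econQG, Matrix.fromRows_mul, hQdef, hSdef]
    rfl
  -- first derivative
  have hfr1 : S * fromRows (1 : Matrix (Fin p) (Fin p) ℝ) (0 : Matrix (Fin (n - p)) (Fin p) ℝ)
      + fromRows (1 : Matrix (Fin p) (Fin p) ℝ) (0 : Matrix (Fin (n - p)) (Fin p) ℝ) * A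
      = fromRows A B := by
    simp [hSdef, Matrix.fromBlocks_mul_fromRows, Matrix.fromRows_mul, fromRows_add']
  have hd1 : deriv (econQG n p U Uperp A B) =
      fun u : ℝ => Q * exp (u • S) * (fromRows A B * exp (u • A)) := by
    rw [hfun]
    funext u
    rw [← hfr1]
    exact (hD _ u).deriv
  -- second derivative
  have hd2 : deriv (deriv (econQG n p U Uperp A B)) t =
      Q * exp (t • S) * ((S * fromRows A B + fromRows A B * A) * exp (t • A)) := by
    rw [hd1]
    exact (hD _ t).deriv
  have hperp : econQGperp n p U Uperp A B t = Q * exp (t • S) * fromRows 0 1 := rfl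
  have hd1' : deriv (econQG n p U Uperp A B) t
      = Q * exp (t • S) * (fromRows A B * exp (t • A)) := by rw [hd1]
  have hγ : econQG n p U Uperp A B t
      = Q * exp (t • S) * ((fromRows 1 0 : Matrix (Fin p ⊕ Fin (n - p)) (Fin p) ℝ) * exp (t • A)) := by rw [hfun]
  have hfr2 : S * fromRows A B + fromRows A B * A
      = fromRows (-(Bᵀ * B) + A * A) (B * A + B * A) := by
    simp [hSdef, Matrix.fromBlocks_mul_fromRows, Matrix.fromRows_mul, fromRows_add']
  rw [hd2, hd1', hγ, hperp, hfr2]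
  exact stmt7core n p Q (exp (t • S)) (exp (t • A)) A B hO₁ hEE hFF hFF' (hAF t) hA
    _ _ _ rfl rfl rfl

end mainproof
end

section
/- Let U, Q be real n×p matrices with UᵀU = QᵀQ = I_p, UᵀQ = 0, let A ∈ so(p) and B ∈ ℝ^{p×p}, and take C = 0. Then the curve ρ(t) = (U Q) exp_m(t[[A,−Bᵀ],[B,0]]) [I_p; 0] has identically vanishing covariant acceleration, D_tρ′(t) = ρ″(t) + ρ′(t)ρ′(t)ᵀρ(t) + ρ(t)((ρ(t)ᵀρ′(t))² + ρ′(t)ᵀρ′(t)) = 0 for all t ∈ ℝ; i.e. ρ is a Riemannian geodesic of the canonical metric on St(n,p). -/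
open Matrix NormedSpace

attribute [local instance] Matrix.frobeniusNormedAddCommGroup Matrix.frobeniusNormedSpace

/-- The short economy-size quasi-geodesic `ρ(t) = (U Q) exp_m(t[[A,−Bᵀ],[B,C]]) [I_p; 0]`. -/
noncomputable def shortQG (n p : ℕ) (U Q : Matrix (Fin n) (Fin p) ℝ)
    (A B C : Matrix (Fin p) (Fin p) ℝ) (t : ℝ) : Matrix (Fin n) (Fin p) ℝ :=
  fromCols U Q * exp (t • fromBlocks A (-Bᵀ) B C) * fromRows 1 0

/-- The accompanying curve `ρ⊥(t) = (U Q) exp_m(t[[A,−Bᵀ],[B,C]]) [0; I_p]`. -/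
noncomputable def shortQGperp (n p : ℕ) (U Q : Matrix (Fin n) (Fin p) ℝ)
    (A B C : Matrix (Fin p) (Fin p) ℝ) (t : ℝ) : Matrix (Fin n) (Fin p) ℝ :=
  fromCols U Q * exp (t • fromBlocks A (-Bᵀ) B C) * fromRows 0 1

attribute [local instance] Matrix.frobeniusNormedRing Matrix.frobeniusNormedAlgebra

/-- Sandwiching `X ↦ W * X * R` as a linear map. -/
noncomputable def sandwichLM (n p : ℕ) (W : Matrix (Fin n) (Fin p ⊕ Fin p) ℝ)
    (R : Matrix (Fin p ⊕ Fin p) (Fin p) ℝ) :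
    Matrix (Fin p ⊕ Fin p) (Fin p ⊕ Fin p) ℝ →ₗ[ℝ] Matrix (Fin n) (Fin p) ℝ where
  toFun X := W * X * R
  map_add' X Y := by simp only [Matrix.mul_add, Matrix.add_mul]
  map_smul' c X := by simp only [Matrix.mul_smul, Matrix.smul_mul, RingHom.id_apply]

lemma sandwich_hasDerivAt (n p : ℕ) (W : Matrix (Fin n) (Fin p ⊕ Fin p) ℝ)
    (R : Matrix (Fin p ⊕ Fin p) (Fin p) ℝ)
    (f : ℝ → Matrix (Fin p ⊕ Fin p) (Fin p ⊕ Fin p) ℝ)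
    (f' : Matrix (Fin p ⊕ Fin p) (Fin p ⊕ Fin p) ℝ) (t : ℝ)
    (hf : HasDerivAt f f' t) :
    HasDerivAt (fun u => W * f u * R) (W * f' * R) t :=
  ((sandwichLM n p W R).toContinuousLinearMap.hasFDerivAt
      (x := f t)).comp_hasDerivAt t hf

lemma fromRows_add'_s17 {m₁ m₂ n : Type*} (a c : Matrix m₁ n ℝ) (b d : Matrix m₂ n ℝ) :
    fromRows a b + fromRows c d = fromRows (a + c) (b + d) := by
  ext (i | i) j <;> simp

/-- The purely algebraic heart of the geodesic equation. -/
lemma covacc_zero (n p : ℕ) (W : Matrix (Fin n) (Fin p ⊕ Fin p) ℝ)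
    (E M : Matrix (Fin p ⊕ Fin p) (Fin p ⊕ Fin p) ℝ)
    (R : Matrix (Fin p ⊕ Fin p) (Fin p) ℝ) (A B : Matrix (Fin p) (Fin p) ℝ)
    (hW : Wᵀ * W = 1) (hE : Eᵀ * E = 1) (hM : Mᵀ = -M)
    (hMR : M * R = fromRows A B)
    (hMMR : M * (M * R) = fromRows (A * A + -(Bᵀ * B)) (B * A))
    (hRt : ∀ X Y : Matrix (Fin p) (Fin p) ℝ, Rᵀ * fromRows X Y = X)
    (hRmul : ∀ X : Matrix (Fin p) (Fin p) ℝ, R * X = fromRows X 0) :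
    W * (E * M * M) * R + W * (E * M) * R * (W * (E * M) * R)ᵀ * (W * E * R) +
      W * E * R * (((W * E * R)ᵀ * (W * (E * M) * R)) ^ 2 +
        (W * (E * M) * R)ᵀ * (W * (E * M) * R)) = 0 := by
  have hcW : ∀ X : Matrix (Fin p ⊕ Fin p) (Fin p) ℝ, Wᵀ * (W * X) = X := fun X => by
    rw [← Matrix.mul_assoc, hW, Matrix.one_mul]
  have hcE : ∀ X : Matrix (Fin p ⊕ Fin p) (Fin p) ℝ, Eᵀ * (E * X) = X := fun X => by
    rw [← Matrix.mul_assoc, hE, Matrix.one_mul]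
  have hRtMR : Rᵀ * (M * R) = A := by rw [hMR, hRt]
  have hRtMtR : Rᵀ * (Mᵀ * R) = -A := by
    rw [hM, Matrix.neg_mul, hMR, fromRows_neg, hRt]
  have hRtMtMR : Rᵀ * (Mᵀ * (M * R)) = -(A * A + -(Bᵀ * B)) := by
    rw [hM, Matrix.neg_mul, hMMR, fromRows_neg, hRt]
  have final : M * (M * R) + M * (R * (Rᵀ * (Mᵀ * R))) +
      R * (A ^ 2 + Rᵀ * (Mᵀ * (M * R))) = 0 := by
    rw [hRtMtR, hRtMtMR, hMMR, hRmul, hRmul]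
    rw [← hRmul (-A), ← Matrix.mul_assoc, hMR]
    rw [fromRows_mul, fromRows_add'_s17, fromRows_add'_s17]
    rw [show A * A + -(Bᵀ * B) + A * -A + (A ^ 2 + -(A * A + -(Bᵀ * B))) = 0 by noncomm_ring,
      show B * A + B * -A + (0 : Matrix (Fin p) (Fin p) ℝ) = 0 by noncomm_ring]
    exact fromRows_zero
  simp only [Matrix.mul_assoc, Matrix.transpose_mul, hcW, hcE]
  rw [hRtMR]
  simp only [← Matrix.mul_add]
  rw [show M * (M * R + R * (Rᵀ * (Mᵀ * R))) + R * (A ^ 2 + Rᵀ * (Mᵀ * (M * R))) = 0 from by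
      rw [Matrix.mul_add]; exact final,
    Matrix.mul_zero, Matrix.mul_zero]

/-- with `C = 0`, the short economy-size quasi-geodesic has identically
vanishing covariant acceleration, i.e. it is a Riemannian geodesic of the canonical metric. -/
theorem stmt17 (n p : ℕ) (U Q : Matrix (Fin n) (Fin p) ℝ)
    (A B : Matrix (Fin p) (Fin p) ℝ)
    (hU : Uᵀ * U = 1) (hQ : Qᵀ * Q = 1) (hUQ : Uᵀ * Q = 0)
    (hA : Aᵀ = -A) :
    ∀ t : ℝ,
      deriv (deriv (shortQG n p U Q A B 0)) t +
          deriv (shortQG n p U Q A B 0) t * (deriv (shortQG n p U Q A B 0) t)ᵀ *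
            shortQG n p U Q A B 0 t +
          shortQG n p U Q A B 0 t *
            (((shortQG n p U Q A B 0 t)ᵀ * deriv (shortQG n p U Q A B 0) t) ^ 2 +
              (deriv (shortQG n p U Q A B 0) t)ᵀ * deriv (shortQG n p U Q A B 0) t) = 0 := by
  intro t
  have hd1 : ∀ s : ℝ, HasDerivAt (shortQG n p U Q A B 0)
      (fromCols U Q * (exp (s • fromBlocks A (-Bᵀ) B 0) * fromBlocks A (-Bᵀ) B 0) *
        fromRows 1 0) s := fun s =>
    sandwich_hasDerivAt n p _ _ _ _ s (hasDerivAt_exp_smul_const (fromBlocks A (-Bᵀ) B 0) s)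
  have hderiv1 : deriv (shortQG n p U Q A B 0) = fun s =>
      fromCols U Q * (exp (s • fromBlocks A (-Bᵀ) B 0) * fromBlocks A (-Bᵀ) B 0) *
        fromRows 1 0 := by
    funext s; exact (hd1 s).deriv
  have hd2 : HasDerivAt (deriv (shortQG n p U Q A B 0))
      (fromCols U Q * (exp (t • fromBlocks A (-Bᵀ) B 0) * fromBlocks A (-Bᵀ) B 0 *
        fromBlocks A (-Bᵀ) B 0) * fromRows 1 0) t := by
    rw [hderiv1]
    exact sandwich_hasDerivAt n p _ _ _ _ t
      ((hasDerivAt_exp_smul_const (fromBlocks A (-Bᵀ) B 0) t).mul_const _)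
  erw [hd2.deriv, hderiv1]
  simp only [shortQG]
  -- hypotheses of the algebraic lemma
  have hQU : Qᵀ * U = 0 := by
    have := congrArg transpose hUQ
    rwa [transpose_mul, transpose_transpose, transpose_zero] at this
  have hM : (fromBlocks A (-Bᵀ) B (0 : Matrix (Fin p) (Fin p) ℝ))ᵀ =
      -fromBlocks A (-Bᵀ) B 0 := by
    rw [fromBlocks_transpose, hA, transpose_neg, transpose_transpose, transpose_zero,
      Matrix.fromBlocks_neg, neg_neg, neg_zero]
  exact covacc_zero n p (fromCols U Q) _ _ (fromRows 1 0) A B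
    (by rw [transpose_fromCols, fromRows_mul_fromCols, hU, hQ, hUQ, hQU,
      ← Matrix.fromBlocks_one])
    (by rw [← Matrix.exp_transpose, transpose_smul, hM, smul_neg]; erw [← NormedSpace.exp_add_of_commute ((Commute.refl _).neg_left)]; simp)
    hM
    (by rw [fromBlocks_mul_fromRows]; simp)
    (by rw [fromBlocks_mul_fromRows, fromBlocks_mul_fromRows]; simp)
    (fun X Y => by
      rw [transpose_fromRows, transpose_one, transpose_zero, fromCols_mul_fromRows]; simp)
    (fun X => by rw [fromRows_mul, Matrix.one_mul, Matrix.zero_mul])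
end
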